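/- arXiv:1610.07320 — 2 statements merged into one kernel-verified Lean document; each statement's English description precedes it below -/
import Mathlib

section
/- Let G=(V,E) be a finite connected simple graph. Then every initial 3-coloring X_0 : V → ℤ/3ℤ yields a 3-color CCA trajectory that synchronizes if and only if G is a tree (contains no cycle). -/
noncomputable section
attribute [local instance] Classical.propDecidable

open Filter

variable {V : Type*}

/-- Unique representative in `{-1,0,1}` of an element of `ℤ/3ℤ`. -/
def ZMod.repInt (a : ZMod 3) : ℤ := if a = 0 then 0 else if a = 1 then 1 else -1

/-- One step of the 3-color cyclic cellular automaton. -/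
def ccaStep (G : SimpleGraph V) (X : V → ZMod 3) : V → ZMod 3 :=
  fun v => if ∃ u, G.Adj v u ∧ X u = X v + 1 then X v + 1 else X v

/-- The CCA trajectory started from `X₀`. -/
def ccaTraj (G : SimpleGraph V) (X₀ : V → ZMod 3) : ℕ → V → ZMod 3 :=
  fun t => (ccaStep G)^[t] X₀

/-- A vertex is excited at time `t` for CCA iff its color advances. -/
def ccaExcited (G : SimpleGraph V) (X₀ : V → ZMod 3) (t : ℕ) (v : V) : Prop :=
  ccaTraj G X₀ (t + 1) v = ccaTraj G X₀ t v + 1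

/-- Number of excitations of `x` at times `0, …, t-1` (CCA). -/
def ccaNe (G : SimpleGraph V) (X₀ : V → ZMod 3) (t : ℕ) (x : V) : ℕ :=
  ((Finset.range t).filter fun s => ccaExcited G X₀ s x).card

/-- The CCA 1-form `dX` on ordered pairs of vertices. -/
def dXcca (X : V → ZMod 3) (u v : V) : ℤ := (X v - X u).repInt

/-- Path integral of the CCA 1-form along a walk. -/
def walkIntCCA {G : SimpleGraph V} (X : V → ZMod 3) {x y : V} (w : G.Walk x y) : ℤ :=
  (w.darts.map fun d => dXcca X d.toProd.1 d.toProd.2).sum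

/-!
Along a closed walk, the sum of the color differences lifted to `{-1, 0, 1}` is a winding number
that the CCA preserves: the lift of an edge difference changes exactly by the difference of the
two endpoints' advances. A synchronized coloring has winding number `0`, while on a cycle
`x → b → c → ⋯ → x` the coloring `b ↦ 1`, `c ↦ 2`, everything else `↦ 0` has winding number `3`.

On a tree every coloring lifts to an integer height function, and the CCA lifts to a dynamics in
which an advancing vertex climbs to the height of a neighbor one step above it. Heights never
decrease and never exceed their initial maximum, so the dynamics reaches a fixed point; a fixed
coloring has no neighbor one step ahead of any vertex, hence is constant on a connected graph.
-/

open Function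

namespace ZMod

lemma repInt_neg (a : ZMod 3) : (-a).repInt = -a.repInt := by
  revert a; decide

lemma repInt_cond_sub_cond (a b : ZMod 3) (p q : Bool) (hp : b = a + 1 → p)
    (hq : a = b + 1 → q) :
    (cond q (b + 1) b - cond p (a + 1) a).repInt = (b - a).repInt + cond q 1 0 - cond p 1 0 := by
  revert a b p q; decide

lemma eq_of_ne_add_one_of_ne_add_one {a b : ZMod 3} (hab : b ≠ a + 1) (hba : a ≠ b + 1) :
    a = b := by
  revert a b; decide

end ZMod

theorem Function.exists_isFixedPt_iterate_of_lt {α : Type*} {f : α → α} (P : α → Prop)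
    (hP : ∀ a, P a → P (f a)) (Φ : α → ℤ) (M : ℤ) (hM : ∀ a, P a → Φ a ≤ M)
    (hΦ : ∀ a, P a → ¬IsFixedPt f a → Φ a < Φ (f a)) {a : α} (ha : P a) :
    ∃ n, IsFixedPt f (f^[n] a) := by
  by_contra! hfix
  have hgrow : ∀ n : ℕ, P (f^[n] a) ∧ Φ a + n ≤ Φ (f^[n] a) := by
    intro n
    induction n with
    | zero => simpa using ha
    | succ n ih =>
      rw [iterate_succ_apply']
      have := hΦ _ ih.1 (hfix n)
      exact ⟨hP _ ih.1, by push_cast; linarith [ih.2]⟩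
  have := hgrow ((M - Φ a).toNat + 1)
  have := hM _ this.1
  omega

theorem SimpleGraph.IsTree.exists_potential {G : SimpleGraph V} (hG : G.IsTree)
    (f : V → V → ℤ) (hf : ∀ ⦃u v⦄, G.Adj u v → f v u = -f u v) :
    ∃ h : V → ℤ, ∀ ⦃u v⦄, G.Adj u v → h v - h u = f u v := by
  obtain ⟨r⟩ := hG.connected.nonempty
  choose P hP _ using hG.existsUnique_path r
  refine ⟨fun v => ((P v).darts.map fun d => f d.fst d.snd).sum, fun u v huv => ?_⟩
  by_cases hu : u ∈ (P v).support
  · simp [hG.isAcyclic.path_concat (hP u) (hP v) huv hu, SimpleGraph.Walk.darts_concat]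
  · have hv := hG.isAcyclic.mem_support_of_ne_mem_support_of_adj_of_isPath (hP u) (hP v) huv hu
    simp [hG.isAcyclic.path_concat (hP v) (hP u) huv.symm hv, SimpleGraph.Walk.darts_concat, hf huv]

section Cca

variable {G : SimpleGraph V}

def ccaExcitation (G : SimpleGraph V) (X : V → ZMod 3) (v : V) : ℤ :=
  if ∃ u, G.Adj v u ∧ X u = X v + 1 then 1 else 0

def IsCcaHeight (G : SimpleGraph V) (X : V → ZMod 3) (h : V → ℤ) : Prop :=
  ∀ ⦃u v⦄, G.Adj u v → h v - h u = dXcca X u v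

def ccaHeightStep (G : SimpleGraph V) (p : (V → ZMod 3) × (V → ℤ)) :
    (V → ZMod 3) × (V → ℤ) :=
  (ccaStep G p.1, p.2 + ccaExcitation G p.1)

lemma ccaExcitation_nonneg (X : V → ZMod 3) (v : V) : 0 ≤ ccaExcitation G X v := by
  unfold ccaExcitation; split_ifs <;> norm_num

lemma ccaStep_apply_eq_self_iff {X : V → ZMod 3} {v : V} :
    ccaStep G X v = X v ↔ ccaExcitation G X v = 0 := by
  unfold ccaStep ccaExcitation; split_ifs <;> simp

lemma isFixedPt_ccaStep_iff {X : V → ZMod 3} :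
    IsFixedPt (ccaStep G) X ↔ ∀ ⦃u v⦄, G.Adj u v → X v ≠ X u + 1 := by
  simp [IsFixedPt, funext_iff, ccaStep]

lemma dXcca_self (X : V → ZMod 3) (u : V) : dXcca X u u = 0 := by
  simp [dXcca, ZMod.repInt]

lemma dXcca_ccaStep (X : V → ZMod 3) {u v : V} (huv : G.Adj u v) :
    dXcca (ccaStep G X) u v = dXcca X u v + ccaExcitation G X v - ccaExcitation G X u := by
  have key := ZMod.repInt_cond_sub_cond (X u) (X v) (decide (∃ z, G.Adj u z ∧ X z = X u + 1))
    (decide (∃ z, G.Adj v z ∧ X z = X v + 1)) (fun h => decide_eq_true ⟨v, huv, h⟩)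
    (fun h => decide_eq_true ⟨u, huv.symm, h⟩)
  unfold dXcca ccaStep ccaExcitation
  simpa only [Bool.cond_decide] using key

lemma walkIntCCA_cons (X : V → ZMod 3) {x m y : V} (h : G.Adj x m) (p : G.Walk m y) :
    walkIntCCA X (.cons h p) = dXcca X x m + walkIntCCA X p := by
  simp [walkIntCCA]

lemma walkIntCCA_ccaStep (X : V → ZMod 3) {x y : V} (w : G.Walk x y) :
    walkIntCCA (ccaStep G X) w = walkIntCCA X w + ccaExcitation G X y - ccaExcitation G X x := by
  induction w with
  | nil => simp [walkIntCCA]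
  | cons h p ih => rw [walkIntCCA_cons, walkIntCCA_cons, dXcca_ccaStep X h, ih]; ring

lemma ccaTraj_succ (X₀ : V → ZMod 3) (t : ℕ) :
    ccaTraj G X₀ (t + 1) = ccaStep G (ccaTraj G X₀ t) :=
  iterate_succ_apply' _ _ _

lemma walkIntCCA_ccaTraj (X₀ : V → ZMod 3) {x : V} (c : G.Walk x x) (t : ℕ) :
    walkIntCCA (ccaTraj G X₀ t) c = walkIntCCA X₀ c := by
  induction t with
  | zero => rfl
  | succ t ih => rw [ccaTraj_succ, walkIntCCA_ccaStep, ih]; ring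

lemma walkIntCCA_eq_dXcca_of_forall_mem_tail (X : V → ZMod 3) {x y : V} (p : G.Walk x y)
    (hp : ∀ u ∈ p.support.tail, X u = X y) : walkIntCCA X p = dXcca X x y := by
  induction p with
  | nil => simp [walkIntCCA, dXcca_self]
  | @cons x m y h p ih =>
    simp only [SimpleGraph.Walk.support_cons, List.tail_cons] at hp
    rw [walkIntCCA_cons, ih fun u hu => hp u (List.mem_of_mem_tail hu)]
    simp [dXcca, hp m p.start_mem_support, ZMod.repInt]

lemma exists_walkIntCCA_eq_three_of_isCycle {x : V} {c : G.Walk x x} (hc : c.IsCycle) :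
    ∃ X : V → ZMod 3, walkIntCCA X c = 3 := by
  rcases c with _ | ⟨hxb, _ | ⟨hbc, q⟩⟩
  · exact (SimpleGraph.Walk.not_isCycle_nil hc).elim
  · exact absurd hxb G.irrefl
  rename_i b c
  obtain ⟨hbcq, hxbq⟩ := (SimpleGraph.Walk.cons_isCycle_iff _ _).1 hc
  obtain ⟨hq, hbq⟩ := (SimpleGraph.Walk.cons_isPath_iff _ _).1 hbcq
  have hcx : c ≠ x := by
    rintro rfl
    obtain rfl := SimpleGraph.Walk.eq_nil_iff_nil.2 (SimpleGraph.Walk.isPath_iff_nil.1 hq)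
    simp [Sym2.eq_swap] at hxbq
  have hcq : c ∉ q.support.tail := by
    have := hq.support_nodup
    rw [← SimpleGraph.Walk.cons_tail_support] at this
    exact (List.nodup_cons.1 this).1
  set X : V → ZMod 3 := fun w => if w = b then 1 else if w = c then 2 else 0 with hX
  have hXx : X x = 0 := by simp [hX, hxb.ne, hcx.symm]
  have hXb : X b = 1 := by simp [hX]
  have hXc : X c = 2 := by simp [hX, hbc.ne']
  refine ⟨X, ?_⟩
  rw [walkIntCCA_cons, walkIntCCA_cons, walkIntCCA_eq_dXcca_of_forall_mem_tail X q ?_]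
  · rw [dXcca, dXcca, dXcca, hXx, hXb, hXc]
    decide
  · intro u hu
    have hub : u ≠ b := fun h => hbq (List.mem_of_mem_tail (h ▸ hu))
    have huc : u ≠ c := fun h => hcq (h ▸ hu)
    rw [hXx]
    simp [hX, hub, huc]

lemma eq_of_adj_of_isFixedPt_ccaStep {X : V → ZMod 3} (hX : IsFixedPt (ccaStep G) X)
    {u v : V} (huv : G.Adj u v) : X u = X v :=
  ZMod.eq_of_ne_add_one_of_ne_add_one (isFixedPt_ccaStep_iff.1 hX huv)
    (isFixedPt_ccaStep_iff.1 hX huv.symm)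

lemma SimpleGraph.Preconnected.eq_of_isFixedPt_ccaStep (hG : G.Preconnected)
    {X : V → ZMod 3} (hX : IsFixedPt (ccaStep G) X) (x y : V) : X x = X y := by
  obtain ⟨p⟩ := hG x y
  induction p with
  | nil => rfl
  | cons h _ ih => exact (eq_of_adj_of_isFixedPt_ccaStep hX h).trans ih

lemma ccaTraj_eq_of_isFixedPt {X₀ : V → ZMod 3} {N t : ℕ}
    (hN : IsFixedPt (ccaStep G) (ccaTraj G X₀ N)) (ht : N ≤ t) :
    ccaTraj G X₀ t = ccaTraj G X₀ N := by
  obtain ⟨k, rfl⟩ := Nat.exists_eq_add_of_le ht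
  rw [ccaTraj, add_comm, iterate_add_apply]
  exact hN.iterate k

lemma SimpleGraph.IsTree.exists_isCcaHeight (hG : G.IsTree) (X : V → ZMod 3) :
    ∃ h, IsCcaHeight G X h :=
  hG.exists_potential (dXcca X) fun u v _ => by rw [dXcca, dXcca, ← neg_sub, ZMod.repInt_neg]

lemma IsCcaHeight.ccaStep {X : V → ZMod 3} {h : V → ℤ} (hh : IsCcaHeight G X h) :
    IsCcaHeight G (ccaStep G X) (h + ccaExcitation G X) := fun u v huv => by
  rw [dXcca_ccaStep X huv, ← hh huv, Pi.add_apply, Pi.add_apply]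
  ring

lemma IsCcaHeight.add_ccaExcitation_le {X : V → ZMod 3} {h : V → ℤ} {M : ℤ}
    (hh : IsCcaHeight G X h) (hM : ∀ v, h v ≤ M) (v : V) : h v + ccaExcitation G X v ≤ M := by
  unfold ccaExcitation
  split_ifs with hv
  · obtain ⟨z, hvz, hz⟩ := hv
    have hclimb : h z - h v = 1 := by rw [hh hvz, dXcca, hz, add_sub_cancel_left]; rfl
    linarith [hM z]
  · linarith [hM v]

lemma lt_sum_ccaHeightStep [Fintype V] {p : (V → ZMod 3) × (V → ℤ)}
    (hp : ¬IsFixedPt (ccaHeightStep G) p) : ∑ v, p.2 v < ∑ v, (ccaHeightStep G p).2 v := by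
  obtain ⟨v, hv⟩ : ∃ v, ccaExcitation G p.1 v ≠ 0 := by
    by_contra! h0
    refine hp (Prod.ext (funext fun v => ccaStep_apply_eq_self_iff.2 (h0 v)) ?_)
    funext v
    simp [ccaHeightStep, h0 v]
  have hpos : 0 < ∑ w, ccaExcitation G p.1 w :=
    lt_of_lt_of_le (lt_of_le_of_ne (ccaExcitation_nonneg _ _) hv.symm)
      (Finset.single_le_sum (fun w _ => ccaExcitation_nonneg p.1 w) (Finset.mem_univ v))
  simp only [ccaHeightStep, Pi.add_apply, Finset.sum_add_distrib]
  linarith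

theorem exists_isFixedPt_ccaTraj [Finite V] {X₀ : V → ZMod 3} {h₀ : V → ℤ}
    (hh : IsCcaHeight G X₀ h₀) : ∃ N, IsFixedPt (ccaStep G) (ccaTraj G X₀ N) := by
  have := Fintype.ofFinite V
  obtain ⟨M, hM⟩ := (Set.finite_range h₀).bddAbove
  have hsemi : Semiconj Prod.fst (ccaHeightStep G) (ccaStep G) := fun _ => rfl
  obtain ⟨n, hn⟩ := exists_isFixedPt_iterate_of_lt
    (fun p => IsCcaHeight G p.1 p.2 ∧ ∀ v, p.2 v ≤ M)
    (fun p hp => ⟨hp.1.ccaStep, hp.1.add_ccaExcitation_le hp.2⟩)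
    (fun p => ∑ v, p.2 v) (Fintype.card V • M)
    (fun p hp => Finset.sum_le_card_nsmul _ _ _ fun v _ => hp.2 v)
    (fun _ _ hp => lt_sum_ccaHeightStep hp) (a := (X₀, h₀)) ⟨hh, fun v => hM ⟨v, rfl⟩⟩
  refine ⟨n, ?_⟩
  rw [ccaTraj, ← hsemi.iterate_right n (X₀, h₀)]
  exact hn.map hsemi

end Cca

/-- On a finite connected graph, every initial 3-coloring yields a synchronizing CCA
trajectory iff the graph is a tree (i.e., acyclic). -/
theorem cca_all_initial_colorings_synchronize_iff_tree [Fintype V] (G : SimpleGraph V)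
    (hconn : G.Connected) :
    (∀ X₀ : V → ZMod 3, ∀ x y : V, ∃ N : ℕ, ∀ t ≥ N,
      ccaTraj G X₀ t x = ccaTraj G X₀ t y) ↔ G.IsAcyclic := by
  refine ⟨fun hsync => ?_, fun hacyc X₀ x y => ?_⟩
  · by_contra hcyc
    obtain ⟨v, c, hc⟩ : ∃ v, ∃ c : G.Walk v v, c.IsCycle := by
      simpa [SimpleGraph.IsAcyclic] using hcyc
    obtain ⟨X₀, hX₀⟩ := exists_walkIntCCA_eq_three_of_isCycle hc
    choose N hN using hsync X₀ v
    set T := Finset.univ.sup N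
    have hsynced : ∀ u, ccaTraj G X₀ T u = ccaTraj G X₀ T v :=
      fun u => (hN u T (Finset.le_sup (Finset.mem_univ u))).symm
    have hzero := walkIntCCA_eq_dXcca_of_forall_mem_tail _ c fun u _ => hsynced u
    rw [walkIntCCA_ccaTraj, hX₀, dXcca_self] at hzero
    exact absurd hzero (by norm_num)
  · obtain ⟨h₀, hh₀⟩ := SimpleGraph.IsTree.exists_isCcaHeight ⟨hconn, hacyc⟩ X₀
    obtain ⟨N, hN⟩ := exists_isFixedPt_ccaTraj hh₀
    refine ⟨N, fun t ht => ?_⟩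
    rw [ccaTraj_eq_of_isFixedPt hN ht]
    exact hconn.preconnected.eq_of_isFixedPt_ccaStep hN x y
end
end

section
/- Let Γ=(V,E) be an infinite, locally finite tree and let X_0 : V → ℤ/3ℤ be any initial 3-coloring. For i ∈ ℤ/3ℤ let X_0^{(i)} be the shifted coloring X_0^{(i)}(x) = X_0(x) + i (mod 3). Let α_CCA(X_0) be the activity of the 3-color CCA trajectory started from X_0, and let α_GHM(X_0^{(i)}) be the activity of the 3-color GHM trajectory started from X_0^{(i)}. Then α_CCA(X_0) ≤ α_GHM(X_0^{(0)}) + α_GHM(X_0^{(1)}) + α_GHM(X_0^{(2)}). -/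
/-!
Fix a shift `i`. In the CCA, call `v` a wave vertex at time `t + 1` if it advances at time `t`
from the colour `-i`. A vertex that is one colour ahead of a neighbour at time `t + 1` must have
advanced at time `t`; from this one finds that the wave vertices obey exactly the recursion
of the vertices of colour `1` in the GHM started from `X₀ + i` (a vertex becomes `1` iff it is
neither `1` now nor was `1` one step before, and has a neighbour of colour `1`), with the same
data at times `0` and `1`. So the GHM excitations of `X₀ + i` are the CCA excitations from
colour `-i`, every CCA excitation is counted by one of the three shifted GHMs, and the activities
compare because the limsup of a finite sum of bounded sequences is at most the sum of the limsups.
-/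

noncomputable section
attribute [local instance] Classical.propDecidable

open Filter

variable {V : Type*}

/-- One step of the 3-color Greenberg–Hastings model. -/
def ghmStep (G : SimpleGraph V) (X : V → ZMod 3) : V → ZMod 3 :=
  fun v => if X v = 0 then (if ∃ u, G.Adj v u ∧ X u = 1 then 1 else 0) else X v + 1

/-- The GHM trajectory started from `X₀`. -/
def ghmTraj (G : SimpleGraph V) (X₀ : V → ZMod 3) : ℕ → V → ZMod 3 :=
  fun t => (ghmStep G)^[t] X₀

/-- A vertex is excited at time `t` for GHM iff its color changes from 0 to 1. -/
def ghmExcited (G : SimpleGraph V) (X₀ : V → ZMod 3) (t : ℕ) (v : V) : Prop :=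
  ghmTraj G X₀ t v = 0 ∧ ghmTraj G X₀ (t + 1) v = 1

/-- Number of excitations of `x` at times `0, …, t-1` (GHM). -/
def ghmNe (G : SimpleGraph V) (X₀ : V → ZMod 3) (t : ℕ) (x : V) : ℕ :=
  ((Finset.range t).filter fun s => ghmExcited G X₀ s x).card

theorem ZMod.eq_zero_or_eq_one_or_eq_two (a : ZMod 3) : a = 0 ∨ a = 1 ∨ a = 2 := by
  decide +revert

section Dynamics

variable {G : SimpleGraph V} {X₀ : V → ZMod 3} {t : ℕ} {u v : V}

theorem ccaTraj_zero : ccaTraj G X₀ 0 = X₀ := rfl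

theorem ccaTraj_succ_apply (t : ℕ) (v : V) :
    ccaTraj G X₀ (t + 1) v = ccaStep G (ccaTraj G X₀ t) v :=
  congrFun (Function.iterate_succ_apply' _ _ _) v

theorem ccaExcited_iff :
    ccaExcited G X₀ t v ↔ ∃ u, G.Adj v u ∧ ccaTraj G X₀ t u = ccaTraj G X₀ t v + 1 := by
  rw [ccaExcited, ccaTraj_succ_apply, ccaStep]
  split_ifs with h <;> grind

theorem ccaTraj_succ_of_not_ccaExcited (h : ¬ ccaExcited G X₀ t v) :
    ccaTraj G X₀ (t + 1) v = ccaTraj G X₀ t v := by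
  rw [ccaExcited_iff] at h
  rw [ccaTraj_succ_apply, ccaStep, if_neg h]

theorem ccaExcited_of_adj (huv : G.Adj v u) (h : ccaTraj G X₀ t u = ccaTraj G X₀ t v + 1) :
    ccaExcited G X₀ t v :=
  ccaExcited_iff.2 ⟨u, huv, h⟩

/-- If `u` had stayed put, then at time `t` either `u` was already one colour ahead of `v`, or,
when `v` moved, `v` was one colour ahead of `u`; either way one of them would be excited. -/
theorem ccaExcited_of_adj_of_succ_eq_add_one (huv : G.Adj u v)
    (h : ccaTraj G X₀ (t + 1) u = ccaTraj G X₀ (t + 1) v + 1) : ccaExcited G X₀ t u := by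
  by_contra hu
  rw [ccaTraj_succ_of_not_ccaExcited hu] at h
  by_cases hv : ccaExcited G X₀ t v
  · exact hu (ccaExcited_of_adj huv (by rw [ccaExcited] at hv; grind))
  · rw [ccaTraj_succ_of_not_ccaExcited hv] at h
    exact hv (ccaExcited_of_adj huv.symm h)

theorem ghmTraj_succ_apply (Y : V → ZMod 3) (t : ℕ) (v : V) :
    ghmTraj G Y (t + 1) v = ghmStep G (ghmTraj G Y t) v :=
  congrFun (Function.iterate_succ_apply' _ _ _) v

theorem ghmStep_eq_one_iff {X : V → ZMod 3} :
    ghmStep G X v = 1 ↔ X v = 0 ∧ ∃ u, G.Adj v u ∧ X u = 1 := by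
  rw [ghmStep]
  split_ifs <;> grind

theorem ghmStep_eq_two_iff {X : V → ZMod 3} : ghmStep G X v = 2 ↔ X v = 1 := by
  rw [ghmStep]
  split_ifs <;> grind

theorem ghmExcited_iff_ghmTraj_succ_eq_one {Y : V → ZMod 3} :
    ghmExcited G Y t v ↔ ghmTraj G Y (t + 1) v = 1 := by
  rw [ghmExcited, ghmTraj_succ_apply, ghmStep_eq_one_iff]
  tauto

theorem ghmTraj_add_two_eq_one_iff {Y : V → ZMod 3} :
    ghmTraj G Y (t + 2) v = 1 ↔ ghmTraj G Y (t + 1) v ≠ 1 ∧ ghmTraj G Y t v ≠ 1 ∧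
      ∃ u, G.Adj v u ∧ ghmTraj G Y (t + 1) u = 1 := by
  have h2 : ghmTraj G Y (t + 1) v = 2 ↔ ghmTraj G Y t v = 1 := by
    rw [ghmTraj_succ_apply, ghmStep_eq_two_iff]
  rw [ghmTraj_succ_apply Y (t + 1), ghmStep_eq_one_iff, ne_eq, ne_eq, ← h2]
  rcases ZMod.eq_zero_or_eq_one_or_eq_two (ghmTraj G Y (t + 1) v) with h | h | h <;> grind

end Dynamics

/-- `ccaWave G X₀ i t v` is the CCA event that plays the role of `ghmTraj G (X₀ + i) t v = 1`:
for `t > 0`, the vertex `v` has just left the colour `-i`. -/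
def ccaWave (G : SimpleGraph V) (X₀ : V → ZMod 3) (i : ZMod 3) : ℕ → V → Prop
  | 0, v => X₀ v + i = 1
  | t + 1, v => ccaExcited G X₀ t v ∧ ccaTraj G X₀ t v + i = 0

section Wave

variable {G : SimpleGraph V} {X₀ : V → ZMod 3} {i : ZMod 3} {t : ℕ} {u v : V}

theorem ccaTraj_add_eq_one_of_ccaWave (h : ccaWave G X₀ i t v) :
    ccaTraj G X₀ t v + i = 1 := by
  cases t with
  | zero => exact h
  | succ t =>
    obtain ⟨hv, hv0⟩ := h
    rw [ccaExcited] at hv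
    grind

theorem ccaWave_of_adj (huv : G.Adj v u) (hv : ccaTraj G X₀ t v + i = 1)
    (hu : ccaWave G X₀ i (t + 1) u) : ccaWave G X₀ i t v := by
  cases t with
  | zero => exact hv
  | succ t =>
    obtain ⟨-, hu0⟩ := hu
    have hvu : ccaTraj G X₀ (t + 1) v = ccaTraj G X₀ (t + 1) u + 1 := by grind
    have hv' := ccaExcited_of_adj_of_succ_eq_add_one huv hvu
    refine ⟨hv', ?_⟩
    rw [ccaExcited] at hv'
    grind

theorem ccaWave_one_iff :
    ccaWave G X₀ i 1 v ↔ X₀ v + i = 0 ∧ ∃ u, G.Adj v u ∧ X₀ u + i = 1 := by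
  change ccaExcited G X₀ 0 v ∧ X₀ v + i = 0 ↔ _
  rw [ccaExcited_iff, ccaTraj_zero]
  grind

theorem ccaWave_add_two_iff :
    ccaWave G X₀ i (t + 2) v ↔ ¬ ccaWave G X₀ i (t + 1) v ∧ ¬ ccaWave G X₀ i t v ∧
      ∃ u, G.Adj v u ∧ ccaWave G X₀ i (t + 1) u := by
  constructor
  · rintro ⟨hv, hv0⟩
    refine ⟨fun h => ?_, fun h => ?_, ?_⟩
    · have := ccaTraj_add_eq_one_of_ccaWave h
      grind
    · have := ccaTraj_add_eq_one_of_ccaWave h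
      by_cases hvt : ccaExcited G X₀ t v
      · rw [ccaExcited] at hvt
        grind
      · rw [ccaTraj_succ_of_not_ccaExcited hvt] at hv0
        grind
    · obtain ⟨u, huv, hu⟩ := ccaExcited_iff.1 hv
      have hu' := ccaExcited_of_adj_of_succ_eq_add_one huv.symm hu
      refine ⟨u, huv, hu', ?_⟩
      rw [ccaExcited] at hu'
      grind
  · rintro ⟨hv1, hv0, u, huv, hu⟩
    have hu1 := ccaTraj_add_eq_one_of_ccaWave hu
    obtain ⟨hut, hu0⟩ := hu
    have hv : ccaTraj G X₀ (t + 1) v + i = 0 := by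
      rcases ZMod.eq_zero_or_eq_one_or_eq_two (ccaTraj G X₀ t v + i) with h | h | h
      · have hvt : ¬ ccaExcited G X₀ t v := fun hvt => hv1 ⟨hvt, h⟩
        rw [ccaTraj_succ_of_not_ccaExcited hvt]
        exact h
      · exact absurd (ccaWave_of_adj huv h ⟨hut, hu0⟩) hv0
      · have hvt : ccaExcited G X₀ t v := ccaExcited_of_adj huv (by grind)
        rw [ccaExcited] at hvt
        grind
    exact ⟨ccaExcited_of_adj huv (by grind), hv⟩

theorem ghmTraj_add_eq_one_iff_ccaWave (t : ℕ) (v : V) :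
    ghmTraj G (fun w => X₀ w + i) t v = 1 ↔ ccaWave G X₀ i t v := by
  induction t using Nat.twoStepInduction generalizing v with
  | zero => rfl
  | one =>
    rw [ghmTraj_succ_apply, ghmStep_eq_one_iff, ccaWave_one_iff]
    rfl
  | more t ih₀ ih₁ =>
    simp only [ghmTraj_add_two_eq_one_iff, ccaWave_add_two_iff, ne_eq, ih₀, ih₁]

theorem ghmExcited_add_iff :
    ghmExcited G (fun w => X₀ w + i) t v ↔
      ccaExcited G X₀ t v ∧ ccaTraj G X₀ t v + i = 0 :=
  ghmExcited_iff_ghmTraj_succ_eq_one.trans (ghmTraj_add_eq_one_iff_ccaWave (t + 1) v)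

end Wave

/-- Each CCA excitation of `x` is a GHM excitation for the shift that moves its colour to `0`. -/
theorem ccaNe_le_sum_ghmNe (G : SimpleGraph V) (X₀ : V → ZMod 3) (t : ℕ) (x : V) :
    ccaNe G X₀ t x ≤ ∑ i : ZMod 3, ghmNe G (fun v => X₀ v + i) t x := by
  refine (Finset.card_le_card fun s hs => ?_).trans Finset.card_biUnion_le
  rw [Finset.mem_filter] at hs
  refine Finset.mem_biUnion.2 ⟨-ccaTraj G X₀ s x, Finset.mem_univ _, Finset.mem_filter.2 ?_⟩
  exact ⟨hs.1, ghmExcited_add_iff.2 ⟨hs.2, add_neg_cancel _⟩⟩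

theorem ghmNe_le (G : SimpleGraph V) (Y : V → ZMod 3) (t : ℕ) (x : V) : ghmNe G Y t x ≤ t :=
  (Finset.card_filter_le _ _).trans (Finset.card_range t).le

theorem Filter.limsup_finset_sum_le {ι β α : Type*} [AddCommGroup α]
    [ConditionallyCompleteLinearOrder α] [DenselyOrdered α] [AddLeftMono α]
    {l : Filter β} [l.NeBot] (s : Finset ι) {f : ι → β → α}
    (h_le : ∀ i ∈ s, IsBoundedUnder (· ≤ ·) l (f i))
    (h_ge : ∀ i ∈ s, IsBoundedUnder (· ≥ ·) l (f i)) :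
    limsup (fun b => ∑ i ∈ s, f i b) l ≤ ∑ i ∈ s, limsup (f i) l := by
  classical
  induction s using Finset.induction with
  | empty => simp
  | insert a s ha ih =>
    simp only [Finset.forall_mem_insert] at h_le h_ge
    have hs_le : IsBoundedUnder (· ≤ ·) l fun b => ∑ i ∈ s, f i b := by
      simpa only [Finset.sum_fn] using isBoundedUnder_le_sum s h_le.2
    have hs_ge : IsBoundedUnder (· ≥ ·) l fun b => ∑ i ∈ s, f i b := by
      simpa only [Finset.sum_fn] using isBoundedUnder_ge_sum s h_ge.2
    simp only [Finset.sum_insert ha]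
    calc limsup (fun b => f a b + ∑ i ∈ s, f i b) l
        ≤ limsup (f a) l + limsup (fun b => ∑ i ∈ s, f i b) l :=
          limsup_add_le h_ge.1 h_le.1 hs_ge.isCoboundedUnder_le hs_le
      _ ≤ limsup (f a) l + ∑ i ∈ s, limsup (f i) l := by
          gcongr
          exact ih h_le.2 h_ge.2

theorem cca_activity_le_sum_of_shifted_ghm_activities_general
    (G : SimpleGraph V)
    (X₀ : V → ZMod 3) (x₀ : V) :
    limsup (fun t : ℕ => (ccaNe G X₀ t x₀ : ℝ) / t) atTop ≤
      ∑ i : ZMod 3,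
        limsup (fun t : ℕ => (ghmNe G (fun v => X₀ v + i) t x₀ : ℝ) / t) atTop := by
  set a : ZMod 3 → ℕ → ℝ := fun i t => (ghmNe G (fun v => X₀ v + i) t x₀ : ℝ) / t
  have ha_le (i : ZMod 3) : IsBoundedUnder (· ≤ ·) atTop (a i) :=
    isBoundedUnder_of ⟨1, fun t => div_le_one_of_le₀ (mod_cast ghmNe_le ..) t.cast_nonneg⟩
  have ha_ge (i : ZMod 3) : IsBoundedUnder (· ≥ ·) atTop (a i) :=
    isBoundedUnder_of ⟨0, fun t => by positivity⟩
  have hcca_le (t : ℕ) : (ccaNe G X₀ t x₀ : ℝ) / t ≤ ∑ i, a i t := by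
    rw [← Finset.sum_div]
    gcongr
    exact_mod_cast ccaNe_le_sum_ghmNe G X₀ t x₀
  calc limsup (fun t : ℕ => (ccaNe G X₀ t x₀ : ℝ) / t) atTop
      ≤ limsup (fun t => ∑ i, a i t) atTop :=
        limsup_le_limsup (.of_forall hcca_le)
          (isCoboundedUnder_le_of_le atTop fun t => by positivity)
          (by simpa only [Finset.sum_fn] using isBoundedUnder_le_sum _ fun i _ => ha_le i)
    _ ≤ ∑ i, limsup (a i) atTop :=
        limsup_finset_sum_le _ (fun i _ => ha_le i) (fun i _ => ha_ge i)

/-- On an infinite, locally finite tree, the CCA activity of an initial coloring is at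
most the sum of the GHM activities of its three color shifts. -/
theorem cca_activity_le_sum_of_shifted_ghm_activities [Infinite V]
    (G : SimpleGraph V) (htree : G.IsTree)
    (hlf : ∀ v : V, (G.neighborSet v).Finite)
    (X₀ : V → ZMod 3) (x₀ : V) :
    limsup (fun t : ℕ => (ccaNe G X₀ t x₀ : ℝ) / t) atTop ≤
      ∑ i : ZMod 3,
        limsup (fun t : ℕ => (ghmNe G (fun v => X₀ v + i) t x₀ : ℝ) / t) atTop :=
  cca_activity_le_sum_of_shifted_ghm_activities_general G X₀ x₀
end
end
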